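/- For bounded self-adjoint operators A and B on a Hilbert space, the Hausdorff distance between their spectra is bounded by the operator norm of their difference: d_h(σ(A), σ(B)) ≤ ‖A − B‖. -/
import Mathlib

/-- Key step: if `A` is self-adjoint and `μ` is in the real spectrum of `B`, then `μ` is
within `‖A - B‖` of the real spectrum of `A`. -/
lemma key_dist {H : Type*} [NormedAddCommGroup H] [InnerProductSpace ℂ H] [CompleteSpace H]
    (A B : H →L[ℂ] H) (hA : IsSelfAdjoint A) {μ : ℝ} (hμ : μ ∈ spectrum ℝ B) :
    ∃ l ∈ spectrum ℝ A, dist μ l ≤ ‖A - B‖ := by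
  have hnt : Nontrivial (H →L[ℂ] H) := by
    by_contra h
    rw [not_nontrivial_iff_subsingleton] at h
    exact (spectrum.mem_iff.mp hμ) (isUnit_of_subsingleton _)
  set S := spectrum ℝ A with hS
  have hSne : S.Nonempty := hA.spectrum_nonempty
  have hScpt : IsCompact S := spectrum.isCompact A
  set d := Metric.infDist μ S with hd
  by_cases hcase : d ≤ ‖A - B‖
  · obtain ⟨y, hy, hy'⟩ := hScpt.exists_infDist_eq_dist hSne μ
    exact ⟨y, hy, by rw [← hy']; exact hcase⟩
  · exfalso
    push_neg at hcase
    have hd0 : 0 < d := lt_of_le_of_lt (norm_nonneg _) hcase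
    have hμS : μ ∉ S := fun h => by
      simp [hd, Metric.infDist_zero_of_mem h] at hd0
    -- the resolvent via continuous functional calculus
    set g : ℝ → ℝ := fun x => (μ - x)⁻¹ with hg
    have hne : ∀ x ∈ S, μ - x ≠ 0 := by
      intro x hx hcon
      exact hμS (by rwa [sub_eq_zero.mp hcon])
    have hgc : ContinuousOn g S :=
      (continuousOn_const.sub continuousOn_id).inv₀ hne
    set R := cfc g A with hR
    have h1 : cfc (fun x : ℝ => μ - x) A = algebraMap ℝ (H →L[ℂ] H) μ - A := by
      rw [cfc_sub (fun _ : ℝ => μ) (fun x : ℝ => x) A, cfc_const μ A, cfc_id' ℝ A]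
    have hprod : (algebraMap ℝ (H →L[ℂ] H) μ - A) * R = 1 := by
      rw [← h1, hR, ← cfc_mul _ _ A (by fun_prop) hgc]
      have : cfc (fun x : ℝ => (μ - x) * g x) A = cfc (fun _ : ℝ => (1 : ℝ)) A := by
        apply cfc_congr
        intro x hx
        exact mul_inv_cancel₀ (hne x hx)
      rw [this, cfc_const 1 A, map_one]
    have hprod' : R * (algebraMap ℝ (H →L[ℂ] H) μ - A) = 1 := by
      rw [← h1, hR, ← cfc_mul _ _ A hgc (by fun_prop)]
      have : cfc (fun x : ℝ => g x * (μ - x)) A = cfc (fun _ : ℝ => (1 : ℝ)) A := by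
        apply cfc_congr
        intro x hx
        exact inv_mul_cancel₀ (hne x hx)
      rw [this, cfc_const 1 A, map_one]
    -- norm bound on the resolvent
    have hRnorm : ‖R‖ ≤ d⁻¹ := by
      apply norm_cfc_le (by positivity)
      intro x hx
      have h1' : d ≤ |μ - x| := by
        rw [← Real.dist_eq]
        exact Metric.infDist_le_dist_of_mem hx
      rw [hg, Real.norm_eq_abs, abs_inv]
      exact inv_anti₀ hd0 h1'
    have hR0 : 0 < ‖R‖ := by
      rw [norm_pos_iff]
      intro h0
      rw [h0, mul_zero] at hprod
      exact one_ne_zero hprod.symm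
    have hdR : d ≤ ‖R‖⁻¹ := by
      rw [le_inv_comm₀ hd0 hR0]
      exact hRnorm
    -- perturb the unit
    set u : (H →L[ℂ] H)ˣ :=
      ⟨algebraMap ℝ (H →L[ℂ] H) μ - A, R, hprod, hprod'⟩ with hu
    have hlt : ‖A - B‖ < ‖(↑u⁻¹ : H →L[ℂ] H)‖⁻¹ := lt_of_lt_of_le hcase hdR
    have hunit : IsUnit (algebraMap ℝ (H →L[ℂ] H) μ - B) := by
      have := (u.add (A - B) hlt).isUnit
      have heq : (↑u : H →L[ℂ] H) + (A - B) = algebraMap ℝ (H →L[ℂ] H) μ - B := by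
        show (algebraMap ℝ (H →L[ℂ] H) μ - A) + (A - B) = _
        abel
      rwa [show ((u.add (A - B) hlt : (H →L[ℂ] H)ˣ) : H →L[ℂ] H) = ↑u + (A - B) from rfl,
        heq] at this
    exact (spectrum.mem_iff.mp hμ) hunit

/-- For bounded self-adjoint operators `A` and `B`, the Hausdorff distance between
their spectra is bounded by the operator norm of their difference. -/
theorem stmt2 {H : Type*} [NormedAddCommGroup H] [InnerProductSpace ℂ H] [CompleteSpace H]
    (A B : H →L[ℂ] H) (hA : IsSelfAdjoint A) (hB : IsSelfAdjoint B) :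
    Metric.hausdorffDist (spectrum ℝ A) (spectrum ℝ B) ≤ ‖A - B‖ := by
  rcases subsingleton_or_nontrivial (H →L[ℂ] H) with h | h
  · have hAe : spectrum ℝ A = ∅ :=
      Set.eq_empty_of_forall_notMem fun μ hμ =>
        (spectrum.mem_iff.mp hμ) (isUnit_of_subsingleton _)
    rw [hAe, Metric.hausdorffDist_empty']
    exact norm_nonneg _
  · apply Metric.hausdorffDist_le_of_mem_dist (norm_nonneg _)
    · intro x hx
      obtain ⟨l, hl, hdist⟩ := key_dist B A hB hx
      exact ⟨l, hl, by rwa [norm_sub_rev] at hdist⟩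
    · intro y hy
      obtain ⟨l, hl, hdist⟩ := key_dist A B hA hy
      exact ⟨l, hl, hdist⟩
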